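/- Let A ⊆ ℝ^d be a bounded convex polytope with positive volume, m_1(A) = 0, M_1(A) = L > 0, and suppose centroid_1(A) > Ld/(d+1). Then there is a contradiction; equivalently, centroid_1(A) ≤ (d/(d+1))·M_1(A) whenever m_1(A) = 0. -/

import Mathlib

/-! Pick p ∈ A with x₁(p) = 0. By convexity the homothety of ratio t/L centred at p maps A into
{x ∈ A | x₁ ≤ t}, so that part of A has volume at least (t/L)^d vol A. The layer-cake formula then
gives ∫_A x₁ = ∫₀^L vol {x ∈ A | t < x₁} dt ≤ vol A · ∫₀^L (1 - (t/L)^d) dt = d/(d+1) · L · vol A. -/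

open MeasureTheory Set Module

theorem Convex.image_homothety_subset_inter_le {𝕜 E : Type*} [Field 𝕜] [LinearOrder 𝕜]
    [IsStrictOrderedRing 𝕜] [AddCommGroup E] [Module 𝕜 E] {A : Set E} (hA : Convex 𝕜 A)
    {f : E →ₗ[𝕜] 𝕜} {p : E} (hp : p ∈ A) (hfp : f p = 0) {L : 𝕜} (hfL : ∀ x ∈ A, f x ≤ L)
    {c : 𝕜} (hc : c ∈ Icc 0 1) :
    AffineMap.homothety p c '' A ⊆ A ∩ {x | f x ≤ c * L} := by
  rintro _ ⟨x, hx, rfl⟩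
  rw [AffineMap.homothety_eq_lineMap]
  have hf_lineMap : f (AffineMap.lineMap p x c) = c * f x := by
    simp [AffineMap.lineMap_apply_module, hfp]
  refine ⟨hA.lineMap_mem hp hx hc, show _ ≤ c * L from hf_lineMap ▸ ?_⟩
  exact mul_le_mul_of_nonneg_left (hfL x hx) hc.1

theorem MeasureTheory.Integrable.integral_eq_integral_Ioc_meas_lt {α : Type*} [MeasurableSpace α]
    {μ : Measure α} {f : α → ℝ} {M : ℝ} (f_intble : Integrable f μ) (f_nn : 0 ≤ᵐ[μ] f)
    (f_bdd : f ≤ᵐ[μ] fun _ ↦ M) :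
    ∫ a, f a ∂μ = ∫ t in Ioc 0 M, μ.real {a | t < f a} := by
  rw [f_intble.integral_eq_integral_Ioc_meas_le f_nn f_bdd]
  refine integral_congr_ae ?_
  filter_upwards [meas_le_ae_eq_meas_lt μ (volume.restrict (Ioc 0 M)) f] with t ht
  exact congrArg ENNReal.toReal ht

theorem intervalIntegral.integral_one_sub_div_pow {L : ℝ} (hL : L ≠ 0) (n : ℕ) :
    ∫ t in (0)..L, (1 - (t / L) ^ n) = n / (n + 1) * L := by
  simp_rw [div_pow]
  rw [intervalIntegral.integral_sub intervalIntegrable_const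
    ((intervalIntegral.intervalIntegrable_pow n).div_const _), intervalIntegral.integral_div,
    integral_pow, intervalIntegral.integral_const]
  field_simp
  ring

section AddHaar

variable {E : Type*} [NormedAddCommGroup E] [NormedSpace ℝ E] [MeasurableSpace E] [BorelSpace E]
  [FiniteDimensional ℝ E] (μ : Measure E) [μ.IsAddHaarMeasure] {A : Set E} {p : E} {L : ℝ}

theorem Convex.ofReal_pow_mul_addHaar_le_addHaar_inter_le (hA : Convex ℝ A)
    {f : E →ₗ[ℝ] ℝ} (hp : p ∈ A) (hfp : f p = 0) (hfL : ∀ x ∈ A, f x ≤ L)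
    {c : ℝ} (hc : c ∈ Icc 0 1) :
    ENNReal.ofReal (c ^ finrank ℝ E) * μ A ≤ μ (A ∩ {x | f x ≤ c * L}) :=
  calc ENNReal.ofReal (c ^ finrank ℝ E) * μ A = μ (AffineMap.homothety p c '' A) := by
        rw [Measure.addHaar_image_homothety, abs_of_nonneg (pow_nonneg hc.1 _)]
    _ ≤ μ (A ∩ {x | f x ≤ c * L}) :=
        measure_mono (hA.image_homothety_subset_inter_le hp hfp hfL hc)

theorem Convex.measureReal_restrict_lt_le (hA : Convex ℝ A) (hAfin : μ A ≠ ⊤)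
    {f : E →L[ℝ] ℝ} (hp : p ∈ A) (hfp : f p = 0) (hfL : ∀ x ∈ A, f x ≤ L) (hL : 0 < L)
    {t : ℝ} (ht : t ∈ Icc 0 L) :
    (μ.restrict A).real {x | t < f x} ≤ (1 - (t / L) ^ finrank ℝ E) * μ.real A := by
  have : IsFiniteMeasure (μ.restrict A) := isFiniteMeasure_restrict.mpr hAfin
  have hc : t / L ∈ Icc 0 1 := ⟨div_nonneg ht.1 hL.le, div_le_one_of_le₀ ht.2 hL.le⟩
  have hsub := hA.ofReal_pow_mul_addHaar_le_addHaar_inter_le μ (f := f.toLinearMap) hp hfp hfL hc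
  rw [div_mul_cancel₀ t hL.ne'] at hsub
  have hle_meas : MeasurableSet {x | f x ≤ t} := measurableSet_le f.measurable measurable_const
  have hlow : (t / L) ^ finrank ℝ E * μ.real A ≤ (μ.restrict A).real {x | f x ≤ t} := by
    rw [measureReal_restrict_apply hle_meas, inter_comm]
    have := ENNReal.toReal_mono (measure_ne_top_of_subset inter_subset_left hAfin) hsub
    rwa [ENNReal.toReal_mul, ENNReal.toReal_ofReal (pow_nonneg hc.1 _)] at this
  have hcompl : {x | t < f x} = {x | f x ≤ t}ᶜ := by ext; simp
  rw [hcompl, measureReal_compl hle_meas, measureReal_restrict_apply_univ]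
  linarith

theorem Convex.setIntegral_le_mul_measureReal (hA : Convex ℝ A) (hAfin : μ A ≠ ⊤)
    (f : E →L[ℝ] ℝ) (hp : p ∈ A) (hfp : f p = 0) (hL : 0 < L) (hf : ∀ x ∈ A, f x ∈ Icc 0 L) :
    ∫ x in A, f x ∂μ ≤ finrank ℝ E / (finrank ℝ E + 1) * L * μ.real A := by
  have hf_ae : ∀ᵐ x ∂μ.restrict A, f x ∈ Icc 0 L :=
    (ae_restrict_mem₀ (hA.nullMeasurableSet μ)).mono hf
  have hint : IntegrableOn f A μ :=
    Measure.integrableOn_of_bounded hAfin f.continuous.aestronglyMeasurable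
      (hf_ae.mono fun x hx ↦ by rw [Real.norm_of_nonneg hx.1]; exact hx.2)
  rw [Integrable.integral_eq_integral_Ioc_meas_lt hint (hf_ae.mono fun x hx ↦ hx.1)
    (hf_ae.mono fun x hx ↦ hx.2)]
  calc ∫ t in Ioc 0 L, (μ.restrict A).real {x | t < f x}
      ≤ ∫ t in Ioc 0 L, (1 - (t / L) ^ finrank ℝ E) * μ.real A := by
        refine integral_mono_of_nonneg (ae_of_all _ fun _ ↦ measureReal_nonneg)
          (Continuous.integrableOn_Ioc (by fun_prop)) ?_
        exact (ae_restrict_mem measurableSet_Ioc).mono fun t ht ↦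
          hA.measureReal_restrict_lt_le μ hAfin hp hfp (fun x hx ↦ (hf x hx).2) hL
            (Ioc_subset_Icc_self ht)
    _ = finrank ℝ E / (finrank ℝ E + 1) * L * μ.real A := by
        rw [integral_mul_const, ← intervalIntegral.integral_of_le hL.le,
          intervalIntegral.integral_one_sub_div_pow hL.ne']

end AddHaar

theorem polytope_centroid_first_coordinate_upper_bound_general
    (d : ℕ) (hd : 0 < d) (s : Finset (Fin d → ℝ))
    (A : Set (Fin d → ℝ)) (hA : A = convexHull ℝ (s : Set (Fin d → ℝ)))
    (hmin : sInf ((fun x => x ⟨0, hd⟩) '' A) = 0)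
    (L : ℝ) (hL : L = sSup ((fun x => x ⟨0, hd⟩) '' A)) (hLpos : 0 < L) :
    (∫ x in A, x ⟨0, hd⟩) / (volume A).toReal ≤ ((d : ℝ) / ((d : ℝ) + 1)) * L := by
  set i : Fin d := ⟨0, hd⟩
  have hAconv : Convex ℝ A := hA ▸ convex_convexHull ℝ _
  have hAcomp : IsCompact A := hA ▸ s.finite_toSet.isCompact_convexHull (𝕜 := ℝ)
  have himg : IsCompact ((fun x : Fin d → ℝ ↦ x i) '' A) := hAcomp.image (continuous_apply i)
  have hne : ((fun x : Fin d → ℝ ↦ x i) '' A).Nonempty := by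
    by_contra h
    rw [not_nonempty_iff_eq_empty.mp h, Real.sSup_empty] at hL
    exact hLpos.ne' hL
  obtain ⟨p, hpA, hp0⟩ : ∃ p ∈ A, p i = 0 := hmin ▸ himg.sInf_mem hne
  have hbounds : ∀ x ∈ A, x i ∈ Icc 0 L := fun x hx ↦
    ⟨hmin ▸ csInf_le himg.bddBelow ⟨x, hx, rfl⟩, hL ▸ le_csSup himg.bddAbove ⟨x, hx, rfl⟩⟩
  have hint := hAconv.setIntegral_le_mul_measureReal volume hAcomp.measure_lt_top.ne
    (ContinuousLinearMap.proj i) hpA hp0 hLpos hbounds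
  rw [finrank_fin_fun ℝ] at hint
  exact div_le_of_le_mul₀ measureReal_nonneg (by positivity) hint

theorem polytope_centroid_first_coordinate_upper_bound
    (d : ℕ) (hd : 0 < d) (s : Finset (Fin d → ℝ))
    (A : Set (Fin d → ℝ)) (hA : A = convexHull ℝ (s : Set (Fin d → ℝ)))
    (hvol : 0 < volume A)
    (hmin : sInf ((fun x => x ⟨0, hd⟩) '' A) = 0)
    (L : ℝ) (hL : L = sSup ((fun x => x ⟨0, hd⟩) '' A)) (hLpos : 0 < L) :
    (∫ x in A, x ⟨0, hd⟩) / (volume A).toReal ≤ ((d : ℝ) / ((d : ℝ) + 1)) * L :=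
  polytope_centroid_first_coordinate_upper_bound_general d hd s A hA hmin L hL hLpos
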